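/- Let 1 ≤ n < d, let P ∈ G(d,n), let A : P → P^⊥ be Lipschitz with Lip(A) ≤ M, and let Γ = {p + A(p) : p ∈ P}. If V ∈ G(d,n) satisfies ‖π_V − π_P‖ ≤ 1/(2(1+M)), then there exists a Lipschitz map A_V : V → V^⊥ with Lip(A_V) ≤ 3(1+M) such that Γ = {v + A_V(v) : v ∈ V}. -/

import Mathlib

open MeasureTheory Metric Module Set
open scoped ENNReal NNReal RealInnerProductSpace

noncomputable section

/-- Euclidean space `ℝ^d`. -/
abbrev Euc (d : ℕ) : Type := EuclideanSpace ℝ (Fin d)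

/-- Orthogonal projection onto a subspace, as a map `ℝ^d → ℝ^d`. -/
noncomputable def projCLM {d : ℕ} (V : Submodule ℝ (Euc d)) : Euc d →L[ℝ] Euc d :=
  V.subtypeL.comp V.orthogonalProjectionOnto

/-- `E` is `n`-Ahlfors–David regular with constants `C₁ ≤ C₂`. -/
def IsADR {d : ℕ} (n : ℕ) (C₁ C₂ : ℝ) (E : Set (Euc d)) : Prop :=
  0 < C₁ ∧ C₁ ≤ C₂ ∧ ∀ x ∈ E, ∀ r : ℝ, 0 < r → ENNReal.ofReal r ≤ EMetric.diam E →
    ENNReal.ofReal (C₁ * r ^ n) ≤ μH[n] (E ∩ closedBall x r) ∧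
      μH[n] (E ∩ closedBall x r) ≤ ENNReal.ofReal (C₂ * r ^ n)

/-- `Γ` is an `n`-dimensional Lipschitz graph with Lipschitz constant at most `M`:
`Γ = {p + A p : p ∈ P}` for an `n`-dimensional subspace `P` and `M`-Lipschitz `A : P → P^⊥`. -/
def IsLipGraph {d : ℕ} (n : ℕ) (M : ℝ≥0) (Γ : Set (Euc d)) : Prop :=
  ∃ (P : Submodule ℝ (Euc d)) (A : P → Pᗮ), finrank ℝ P = n ∧ LipschitzWith M A ∧
    Γ = {x | ∃ p : P, x = (p : Euc d) + (A p : Euc d)}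

/-- `E` has big pieces of Lipschitz graphs with constants `M` and `δ`. -/
def HasBPLG {d : ℕ} (n : ℕ) (M : ℝ≥0) (δ : ℝ) (E : Set (Euc d)) : Prop :=
  0 < δ ∧ ∀ x ∈ E, ∀ r : ℝ, 0 < r → ENNReal.ofReal r ≤ EMetric.diam E →
    ∃ Γ : Set (Euc d), IsLipGraph n M Γ ∧
      ENNReal.ofReal (δ * r ^ n) ≤ μH[n] (E ∩ Γ ∩ closedBall x r)

/-- The coordinate subspace `ℝⁿ × {0} ⊆ ℝ^d`. -/
def coordSubspace (d n : ℕ) : Submodule ℝ (Euc d) where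
  carrier := {x | ∀ i : Fin d, n ≤ (i : ℕ) → x i = 0}
  add_mem' := by
    intro a b ha hb i hi
    simp [PiLp.add_apply, ha i hi, hb i hi]
  zero_mem' := by intro i hi; rfl
  smul_mem' := by
    intro c a ha i hi
    simp [PiLp.smul_apply, ha i hi]

/-- The closed ball of radius `ρ` around `W` in the Grassmannian `G(d,n)`, realised as a set
of subspaces of `ℝ^d`, with the metric `‖V - W‖ = ‖π_V - π_W‖` (operator norm). -/
def grBall {d : ℕ} (n : ℕ) (W : Submodule ℝ (Euc d)) (ρ : ℝ) : Set (Submodule ℝ (Euc d)) :=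
  {V | finrank ℝ V = n ∧ ‖projCLM V - projCLM W‖ ≤ ρ}

/-- The Borel σ-algebra on subspaces of `ℝ^d`, induced by `V ↦ π_V`. -/
instance grassMeasurableSpace (d : ℕ) : MeasurableSpace (Submodule ℝ (Euc d)) :=
  MeasurableSpace.comap (fun V => projCLM V) (borel (Euc d →L[ℝ] Euc d))

/-- The orthogonal group `O(d)`. -/
abbrev OG (d : ℕ) := Matrix.orthogonalGroup (Fin d) ℝ

instance (d : ℕ) : MeasurableSpace (OG d) := borel _

/-- `μ` is the Haar probability measure on the orthogonal group `O(d)`: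
a left-invariant Borel probability measure. -/
def IsHaarProb {d : ℕ} (μ : Measure (OG d)) : Prop :=
  IsProbabilityMeasure μ ∧ ∀ g : OG d, Measure.map (fun h => g * h) μ = μ

/-- The measure `γ_{d,n}` on the Grassmannian: the pushforward of the Haar probability
measure `μ` on `O(d)` under the map `g ↦ g(ℝⁿ × {0})`. -/
def grassmannOf {d : ℕ} (n : ℕ) (μ : Measure (OG d)) : Measure (Submodule ℝ (Euc d)) :=
  Measure.map
    (fun g : OG d => (coordSubspace d n).map
      (Matrix.toEuclideanLin (g : Matrix (Fin d) (Fin d) ℝ))) μ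

/-- The pushforward `π_{V♯}(Hⁿ|_E)` of `Hⁿ` restricted to `E` under the orthogonal
projection onto `V`. -/
def projPush {d : ℕ} (n : ℕ) (E : Set (Euc d)) (V : Submodule ℝ (Euc d)) : Measure (Euc d) :=
  Measure.map (projCLM V) (μH[n].restrict E)

/-- `Hⁿ` on the subspace `V`. -/
def hausdorffOn {d : ℕ} (n : ℕ) (V : Submodule ℝ (Euc d)) : Measure (Euc d) :=
  μH[n].restrict (V : Set (Euc d))

/-- The squared `L²(V)`-norm of the Radon–Nikodym derivative of `π_{V♯}(Hⁿ|_E)` with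
respect to `Hⁿ` on `V`. -/
def pushL2sq {d : ℕ} (n : ℕ) (E : Set (Euc d)) (V : Submodule ℝ (Euc d)) : ℝ≥0∞ :=
  ∫⁻ z, ((projPush n E V).rnDeriv (hausdorffOn n V) z) ^ 2 ∂(hausdorffOn n V)

/-- `π_{V♯}(Hⁿ|_E) ∈ L²(V)`: the pushforward is absolutely continuous with respect to `Hⁿ`
on `V`, with square-integrable density. -/
def MemL2 {d : ℕ} (n : ℕ) (E : Set (Euc d)) (V : Submodule ℝ (Euc d)) : Prop :=
  projPush n E V ≪ hausdorffOn n V ∧ pushL2sq n E V < ∞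

/-- The (two-sided) cone `X(x, V, α) = {y : |π_{V^⊥}(x - y)| ≤ α |x - y|}`. -/
def cone {d : ℕ} (V : Submodule ℝ (Euc d)) (x : Euc d) (α : ℝ) : Set (Euc d) :=
  {y | ‖projCLM Vᗮ (x - y)‖ ≤ α * ‖x - y‖}

/-- The truncated cone `X(x, V, α, R, r)`. -/
def coneAnn {d : ℕ} (V : Submodule ℝ (Euc d)) (x : Euc d) (α R r : ℝ) : Set (Euc d) :=
  cone V x α ∩ (closedBall x R \ ball x r)

/-- The vertical cone `X(x, α) := X(x, {0} × ℝ^{d-n}, α) = {y : |π_{ℝⁿ×{0}}(x-y)| ≤ α|x-y|}`. -/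
def vertCone {d : ℕ} (n : ℕ) (x : Euc d) (α : ℝ) : Set (Euc d) :=
  {y | ‖projCLM (coordSubspace d n) (x - y)‖ ≤ α * ‖x - y‖}

/-- The truncated vertical cone `X(x, α, R, r)`. -/
def vertConeAnn {d : ℕ} (n : ℕ) (x : Euc d) (α R r : ℝ) : Set (Euc d) :=
  vertCone n x α ∩ (closedBall x R \ ball x r)

/-- `E` satisfies the `n`-dimensional `(θ, M)`-property: for every `x ∈ E` at most `M`
dyadic scales `j` have `X(x, θ, 2^{-j}, 2^{-j-1}) ∩ E ≠ ∅`. -/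
def ThetaMProp {d : ℕ} (n : ℕ) (θ : ℝ) (M : ℕ) (E : Set (Euc d)) : Prop :=
  ∀ x ∈ E,
    {j : ℤ | (vertConeAnn n x θ (2 ^ (-j)) (2 ^ (-j - 1)) ∩ E).Nonempty}.Finite ∧
    {j : ℤ | (vertConeAnn n x θ (2 ^ (-j)) (2 ^ (-j - 1)) ∩ E).Nonempty}.ncard ≤ M

/-- The one-sided cone `X⁺(x, w, α)` in direction `w`. -/
def oneSidedCone {d : ℕ} (w : Euc d) (x : Euc d) (α : ℝ) : Set (Euc d) :=
  {y | ‖projCLM (Submodule.span ℝ {w})ᗮ (x - y)‖ ≤ α * ‖x - y‖ ∧ 0 ≤ ⟪y - x, w⟫}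

/-- The truncated one-sided cone `X⁺(x, w, α, R, r)`. -/
def oneSidedConeAnn {d : ℕ} (w : Euc d) (x : Euc d) (α R r : ℝ) : Set (Euc d) :=
  oneSidedCone w x α ∩ (closedBall x R \ ball x r)

/-- Combining `x ∈ ℝⁿ` and `y ∈ ℝ^{d-n}` into a point of `ℝ^d = ℝⁿ × ℝ^{d-n}`. -/
def pairFun {d n : ℕ} (x : Euc n) (y : Euc (d - n)) : Euc d :=
  WithLp.toLp 2 fun i => if h' : (i : ℕ) < n then x ⟨i, h'⟩ else y ⟨(i : ℕ) - n, by
    have := i.isLt; omega⟩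

/-!
Write `F p = p + A p` and `δ = ‖π_V - π_P‖`. Since `π_P ∘ F = id`, for `p q ∈ P`
`‖p - q‖ ≤ ‖π_V (F p - F q)‖ + δ (1 + M) ‖p - q‖`, so `g = π_V ∘ F : P → V` is `2`-antilipschitz.
Moreover `g` differs from the linear isomorphism `π_V|_P` (whose inverse has norm `≤ (1 - δ)⁻¹`) by
`π_V ∘ A`, which is `δ M`-Lipschitz because `π_V = π_V - π_P` on `Pᗮ`; as `δ M < 1 - δ`, the
Lipschitz perturbation theorem for linear isomorphisms makes `g` onto. Hence `Γ` is the graph over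
`V` of `π_{Vᗮ} ∘ F ∘ g⁻¹`, which is `2 (1 + M)`-Lipschitz.
-/

theorem projCLM_eq_starProjection {d : ℕ} (V : Submodule ℝ (Euc d)) :
    projCLM V = V.starProjection :=
  rfl

namespace Submodule

variable {E : Type*} [NormedAddCommGroup E] [InnerProductSpace ℝ E]
  {P V : Submodule ℝ E} [P.HasOrthogonalProjection] [V.HasOrthogonalProjection]

theorem norm_starProjection_le_add (x : E) :
    ‖P.starProjection x‖ ≤ ‖V.starProjection x‖ + ‖V.starProjection - P.starProjection‖ * ‖x‖ :=
  calc ‖P.starProjection x‖ = ‖V.starProjection x - (V.starProjection - P.starProjection) x‖ := by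
        simp
    _ ≤ _ := (norm_sub_le _ _).trans (by grw [(V.starProjection - P.starProjection).le_opNorm x])

theorem lipschitzWith_orthogonalProjectionOnto_comp_orthogonal :
    LipschitzWith ‖V.starProjection - P.starProjection‖₊
      (fun x : Pᗮ => V.orthogonalProjectionOnto (x : E)) := by
  refine LipschitzWith.of_dist_le_mul fun x y => ?_
  have hxy : P.starProjection ((x : E) - y) = 0 :=
    (P.starProjection_apply_eq_zero_iff).mpr (Pᗮ.sub_mem x.2 y.2)
  simpa [dist_eq_norm, ← map_sub, ← starProjection_apply, hxy] using
    (V.starProjection - P.starProjection).le_opNorm ((x : E) - y)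

theorem sub_mul_norm_le_norm_orthogonalProjectionOnto (p : P) :
    (1 - ‖V.starProjection - P.starProjection‖) * ‖p‖ ≤ ‖V.orthogonalProjectionOnto (p : E)‖ := by
  have h := norm_starProjection_le_add (P := P) (V := V) (p : E)
  rw [starProjection_eq_self_iff.mpr p.2, starProjection_apply] at h
  simp only [norm_coe] at h
  linarith

variable [FiniteDimensional ℝ P] [FiniteDimensional ℝ V]

def orthogonalProjectionEquivOfNear (hdim : finrank ℝ P = finrank ℝ V)
    (hnear : ‖V.starProjection - P.starProjection‖ < 1) : P ≃L[ℝ] V :=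
  LinearEquiv.toContinuousLinearEquiv <|
    LinearMap.linearEquivOfInjective (V.orthogonalProjectionOnto ∘L P.subtypeL : P →ₗ[ℝ] V)
      ((injective_iff_map_eq_zero _).mpr fun p hp => by
        have h := sub_mul_norm_le_norm_orthogonalProjectionOnto (P := P) (V := V) p
        rw [show V.orthogonalProjectionOnto (p : E) = 0 from hp, norm_zero] at h
        exact norm_le_zero_iff.mp (by nlinarith [norm_nonneg p]))
      hdim

@[simp]
theorem orthogonalProjectionEquivOfNear_apply (hdim : finrank ℝ P = finrank ℝ V)
    (hnear : ‖V.starProjection - P.starProjection‖ < 1) (p : P) :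
    orthogonalProjectionEquivOfNear hdim hnear p = V.orthogonalProjectionOnto (p : E) :=
  rfl

theorem norm_orthogonalProjectionEquivOfNear_symm_le (hdim : finrank ℝ P = finrank ℝ V)
    (hnear : ‖V.starProjection - P.starProjection‖ < 1) :
    ‖((orthogonalProjectionEquivOfNear hdim hnear).symm : V →L[ℝ] P)‖ ≤
      (1 - ‖V.starProjection - P.starProjection‖)⁻¹ := by
  have hpos : 0 < 1 - ‖V.starProjection - P.starProjection‖ := sub_pos.mpr hnear
  refine ContinuousLinearMap.opNorm_le_bound _ (by positivity) fun v => ?_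
  have h := sub_mul_norm_le_norm_orthogonalProjectionOnto (P := P) (V := V)
    ((orthogonalProjectionEquivOfNear hdim hnear).symm v)
  rw [← orthogonalProjectionEquivOfNear_apply hdim hnear, ContinuousLinearEquiv.apply_symm_apply] at h
  rw [inv_mul_eq_div, le_div_iff₀ hpos, mul_comm]
  exact h

end Submodule

section LipschitzGraph

open Submodule

variable {E : Type*} [NormedAddCommGroup E] [InnerProductSpace ℝ E] {P V : Submodule ℝ E}

def graphMap (A : P → Pᗮ) (p : P) : E := p + A p

theorem LipschitzWith.graphMap {A : P → Pᗮ} {M : ℝ≥0} (hA : LipschitzWith M A) :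
    LipschitzWith (1 + M) (graphMap A) := by
  have h := (LipschitzWith.subtype_val (P : Set E)).add ((LipschitzWith.subtype_val _).comp hA)
  rwa [one_mul] at h

variable [P.HasOrthogonalProjection] [V.HasOrthogonalProjection]

theorem starProjection_graphMap (A : P → Pᗮ) (p : P) : P.starProjection (graphMap A p) = p := by
  simp [graphMap, starProjection_eq_self_iff.mpr p.2,
    (P.starProjection_apply_eq_zero_iff).mpr (A p).2]

theorem antilipschitzWith_orthogonalProjectionOnto_graphMap {A : P → Pᗮ} {M : ℝ≥0}
    (hA : LipschitzWith M A) (hnear : ‖V.starProjection - P.starProjection‖ * (1 + M) ≤ 1 / 2) :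
    AntilipschitzWith 2 (fun p => V.orthogonalProjectionOnto (graphMap A p)) := by
  refine AntilipschitzWith.of_le_mul_dist fun p q => ?_
  have hproj := norm_starProjection_le_add (P := P) (V := V) (graphMap A p - graphMap A q)
  have hF := hA.graphMap.dist_le_mul p q
  rw [map_sub, starProjection_graphMap, starProjection_graphMap] at hproj
  have hdist : dist (V.orthogonalProjectionOnto (graphMap A p))
      (V.orthogonalProjectionOnto (graphMap A q)) =
      ‖V.starProjection (graphMap A p - graphMap A q)‖ := by
    rw [dist_eq_norm, ← map_sub]
    rfl
  rw [hdist, Subtype.dist_eq, dist_eq_norm]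
  rw [dist_eq_norm, Subtype.dist_eq, dist_eq_norm] at hF
  push_cast at hF ⊢
  have hδ := mul_le_mul_of_nonneg_left hF (norm_nonneg (V.starProjection - P.starProjection))
  have hhalf := mul_le_mul_of_nonneg_right hnear (norm_nonneg ((p : E) - q))
  linarith

theorem surjective_orthogonalProjectionOnto_graphMap [FiniteDimensional ℝ P]
    [FiniteDimensional ℝ V] (hdim : finrank ℝ P = finrank ℝ V) {A : P → Pᗮ} {M : ℝ≥0}
    (hA : LipschitzWith M A) (hnear : ‖V.starProjection - P.starProjection‖ * (1 + M) < 1) :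
    Function.Surjective (fun p => V.orthogonalProjectionOnto (graphMap A p)) := by
  have hδ : ‖V.starProjection - P.starProjection‖ < 1 := by
    nlinarith [norm_nonneg (V.starProjection - P.starProjection), M.coe_nonneg]
  set e := orthogonalProjectionEquivOfNear hdim hδ
  have happrox : ApproximatesLinearOn (fun p => V.orthogonalProjectionOnto (graphMap A p))
      (e : P →L[ℝ] V) univ (‖V.starProjection - P.starProjection‖₊ * M) := by
    have h : (fun p => V.orthogonalProjectionOnto (graphMap A p)) - e =
        fun p => V.orthogonalProjectionOnto (A p : E) := by
      ext p; simp [e, graphMap]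
    refine LipschitzOnWith.approximatesLinearOn ?_
    rw [ContinuousLinearEquiv.coe_coe, h]
    exact (lipschitzWith_orthogonalProjectionOnto_comp_orthogonal.comp hA).lipschitzOnWith
  refine happrox.surjective ?_
  rcases subsingleton_or_nontrivial P with hP | hP
  · exact Or.inl hP
  right
  have hN := (le_inv_comm₀ e.norm_symm_pos (sub_pos.mpr hδ)).mp
    (norm_orthogonalProjectionEquivOfNear_symm_le hdim hδ)
  rw [← NNReal.coe_lt_coe]
  push_cast
  linarith

theorem range_eq_range_add_orthogonalProjectionOnto {X : Type*} (F : X → E) (g : X ≃ V)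
    (hg : ∀ x, V.orthogonalProjectionOnto (F x) = g x) :
    range F = range fun v : V => (v : E) + Vᗮ.orthogonalProjectionOnto (F (g.symm v)) := by
  have hsplit (z : E) : (V.orthogonalProjectionOnto z : E) + Vᗮ.orthogonalProjectionOnto z = z :=
    V.starProjection_add_starProjection_orthogonal z
  ext y
  constructor
  · rintro ⟨x, rfl⟩
    refine ⟨g x, ?_⟩
    dsimp only
    rw [Equiv.symm_apply_apply, ← hg, hsplit]
  · rintro ⟨v, rfl⟩
    refine ⟨g.symm v, ?_⟩
    conv_lhs => rw [← hsplit (F (g.symm v)), hg, g.apply_symm_apply]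

end LipschitzGraph

theorem stmt11_general (n d : ℕ) (M : ℝ≥0)
    (P V : Submodule ℝ (Euc d)) (hP : finrank ℝ P = n) (hV : finrank ℝ V = n)
    (A : P → Pᗮ) (hA : LipschitzWith M A)
    (Γ : Set (Euc d)) (hΓ : Γ = {x | ∃ p : P, x = (p : Euc d) + (A p : Euc d)})
    (hclose : ‖projCLM V - projCLM P‖ ≤ 1 / (2 * (1 + (M : ℝ)))) :
    ∃ AV : V → Vᗮ, LipschitzWith (3 * (1 + M)) AV ∧
      Γ = {x | ∃ v : V, x = (v : Euc d) + (AV v : Euc d)} := by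
  rw [projCLM_eq_starProjection, projCLM_eq_starProjection] at hclose
  have hnear : ‖V.starProjection - P.starProjection‖ * (1 + M) ≤ 1 / 2 := by
    calc _ ≤ 1 / (2 * (1 + (M : ℝ))) * (1 + M) := by gcongr
      _ = 1 / 2 := by field_simp
  have hanti := antilipschitzWith_orthogonalProjectionOnto_graphMap hA hnear
  let g : P ≃ V := Equiv.ofBijective _ ⟨hanti.injective,
    surjective_orthogonalProjectionOnto_graphMap (hP.trans hV.symm) hA (by linarith)⟩
  refine ⟨fun v => Vᗮ.orthogonalProjectionOnto (graphMap A (g.symm v)), ?_, ?_⟩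
  · have hg : LipschitzWith 2 g.symm := hanti.to_rightInverse g.apply_symm_apply
    refine (Vᗮ.lipschitzWith_orthogonalProjectionOnto.comp (hA.graphMap.comp hg)).weaken ?_
    rw [one_mul, mul_comm]
    gcongr
    norm_num
  · have hΓ' : Γ = range (graphMap A) := by
      ext; simp [hΓ, graphMap, eq_comm]
    rw [hΓ', range_eq_range_add_orthogonalProjectionOnto (graphMap A) g fun _ => rfl]
    ext; simp [eq_comm]

/-- a Lipschitz graph over `P` is also a Lipschitz graph over any plane `V`
sufficiently close to `P`, with controlled Lipschitz constant. -/
theorem stmt11 (n d : ℕ) (hn : 1 ≤ n) (hnd : n < d) (M : ℝ≥0)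
    (P V : Submodule ℝ (Euc d)) (hP : finrank ℝ P = n) (hV : finrank ℝ V = n)
    (A : P → Pᗮ) (hA : LipschitzWith M A)
    (Γ : Set (Euc d)) (hΓ : Γ = {x | ∃ p : P, x = (p : Euc d) + (A p : Euc d)})
    (hclose : ‖projCLM V - projCLM P‖ ≤ 1 / (2 * (1 + (M : ℝ)))) :
    ∃ AV : V → Vᗮ, LipschitzWith (3 * (1 + M)) AV ∧
      Γ = {x | ∃ v : V, x = (v : Euc d) + (AV v : Euc d)} :=
  stmt11_general n d M P V hP hV A hA Γ hΓ hclose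

end
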